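/- Let G be an unmixed graph without isolated vertices such that the graph G_J of minimal vertex covers is connected. Then every vertex of G lies in some exchange edge of G; that is, for every t ∈ V(G) there exist minimal vertex covers C, C' and a vertex t' with {t,t'} ∈ E(G) and C' = (C \ {t'}) ∪ {t}. -/
import Mathlib


/-- `C` is a vertex cover of `G`: every edge of `G` meets `C`. -/
def IsVC {V : Type*} (G : SimpleGraph V) (C : Finset V) : Prop :=
  ∀ ⦃u v : V⦄, G.Adj u v → u ∈ C ∨ v ∈ C

/-- `C` is a minimal vertex cover of `G`. -/
def IsMinVC {V : Type*} (G : SimpleGraph V) (C : Finset V) : Prop :=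
  IsVC G C ∧ ∀ D ⊆ C, IsVC G D → D = C

open Finset

lemma exists_minVC_subset {V : Type*} [Fintype V] [DecidableEq V] (G : SimpleGraph V)
    (C0 : Finset V) : IsVC G C0 → ∃ C ⊆ C0, IsMinVC G C := by
  induction C0 using Finset.strongInductionOn with
  | _ C0 ih =>
    intro h
    by_cases hmin : ∀ D ⊆ C0, IsVC G D → D = C0
    · exact ⟨C0, subset_rfl, h, hmin⟩
    · push_neg at hmin
      obtain ⟨D, hD, hDvc, hne⟩ := hmin
      obtain ⟨C, hC, hCmin⟩ := ih D (ssubset_of_subset_of_ne hD hne) hDvc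
      exact ⟨C, hC.trans hD, hCmin⟩

lemma exists_cross (P : ℕ → Prop) : ∀ n, ¬ P 0 → P n → ∃ i < n, ¬ P i ∧ P (i+1) := by
  intro n
  induction n with
  | zero => intro h0 hn; exact absurd hn h0
  | succ m ih =>
    intro h0 hn
    by_cases hm : P m
    · obtain ⟨i, hi, h⟩ := ih h0 hm
      exact ⟨i, Nat.lt_succ_of_lt hi, h⟩
    · exact ⟨m, Nat.lt_succ_self m, hm, hn⟩

theorem connected_cover_graph_exchange_edges_cover
    {V : Type*} [Fintype V] [DecidableEq V] (G : SimpleGraph V)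
    (d : ℕ)
    (hiso : ∀ v : V, ∃ u : V, G.Adj v u)
    (hd : ∀ C : Finset V, IsMinVC G C → C.card = d)
    (hconn : ∀ C D : Finset V, IsMinVC G C → IsMinVC G D →
      ∃ (n : ℕ) (W : ℕ → Finset V), W 0 = C ∧ W n = D ∧
        (∀ i ≤ n, IsMinVC G (W i)) ∧ ∀ i < n, (W i ∩ W (i + 1)).card = d - 1) :
    ∀ t : V, ∃ (C C' : Finset V) (t' : V), IsMinVC G C ∧ IsMinVC G C' ∧
      G.Adj t t' ∧ C' = insert t (C.erase t') := by
  intro t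
  obtain ⟨u, hu⟩ := hiso t
  -- a minimal vertex cover avoiding t
  have hvc1 : IsVC G (Finset.univ.erase t) := by
    intro a b hab
    by_cases ha : a = t
    · right
      exact Finset.mem_erase.2 ⟨fun hb => G.ne_of_adj hab (ha.trans hb.symm), Finset.mem_univ _⟩
    · exact Or.inl (Finset.mem_erase.2 ⟨ha, Finset.mem_univ _⟩)
  obtain ⟨D, hDsub, hDmin⟩ := exists_minVC_subset G _ hvc1
  have htD : t ∉ D := fun h => (Finset.mem_erase.1 (hDsub h)).1 rfl
  -- a minimal vertex cover containing t
  have hvc2 : IsVC G (Finset.univ.erase u) := by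
    intro a b hab
    by_cases ha : a = u
    · right
      exact Finset.mem_erase.2 ⟨fun hb => G.ne_of_adj hab (ha.trans hb.symm), Finset.mem_univ _⟩
    · exact Or.inl (Finset.mem_erase.2 ⟨ha, Finset.mem_univ _⟩)
  obtain ⟨C1, hC1sub, hC1min⟩ := exists_minVC_subset G _ hvc2
  have huC1 : u ∉ C1 := fun h => (Finset.mem_erase.1 (hC1sub h)).1 rfl
  have htC1 : t ∈ C1 := (hC1min.1 hu).resolve_right huC1
  obtain ⟨n, W, hW0, hWn, hWmin, hWcard⟩ := hconn D C1 hDmin hC1min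
  obtain ⟨i, hin, hti, hti1⟩ := exists_cross (fun i => t ∈ W i) n
    (by show ¬ t ∈ W 0; rw [hW0]; exact htD) (by show t ∈ W n; rw [hWn]; exact htC1)
  set A := W i with hAdef
  set B := W (i+1) with hBdef
  have hA : IsMinVC G A := hWmin i hin.le
  have hB : IsMinVC G B := hWmin (i+1) hin
  have hAcard : A.card = d := hd A hA
  have hBcard : B.card = d := hd B hB
  have hint : (A ∩ B).card = d - 1 := hWcard i hin
  have hd1 : 1 ≤ d := by
    rcases hA.1 hu with h | h
    · exact absurd h hti
    · have : A.Nonempty := ⟨u, h⟩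
      rw [← hAcard]; exact Finset.card_pos.2 this
  have hBA : (B \ A).card = 1 := by
    have := Finset.card_inter_add_card_sdiff B A
    rw [Finset.inter_comm, hint, hBcard] at this
    omega
  have hAB : (A \ B).card = 1 := by
    have := Finset.card_inter_add_card_sdiff A B
    rw [hint, hAcard] at this
    omega
  obtain ⟨t', hABt'⟩ := Finset.card_eq_one.1 hAB
  have ht'A : t' ∈ A := (Finset.mem_sdiff.1 (hABt' ▸ Finset.mem_singleton_self t')).1
  have ht'B : t' ∉ B := (Finset.mem_sdiff.1 (hABt' ▸ Finset.mem_singleton_self t')).2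
  obtain ⟨s, hBAs⟩ := Finset.card_eq_one.1 hBA
  have hts : s = t := by
    have : t ∈ B \ A := Finset.mem_sdiff.2 ⟨hti1, hti⟩
    rw [hBAs, Finset.mem_singleton] at this
    exact this.symm
  subst hts
  have heq : B = insert s (A.erase t') := by
    ext x
    simp only [Finset.mem_insert, Finset.mem_erase]
    constructor
    · intro hx
      by_cases hxA : x ∈ A
      · right
        exact ⟨fun h => ht'B (h ▸ hx), hxA⟩
      · left
        have : x ∈ B \ A := Finset.mem_sdiff.2 ⟨hx, hxA⟩
        rw [hBAs, Finset.mem_singleton] at this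
        exact this
    · rintro (rfl | ⟨hx, hxA⟩)
      · exact hti1
      · by_contra hxB
        have : x ∈ A \ B := Finset.mem_sdiff.2 ⟨hxA, hxB⟩
        rw [hABt', Finset.mem_singleton] at this
        exact hx this
  -- the erased set is not a cover
  have hnot : ¬ IsVC G (A.erase t') := by
    intro hvc
    have h2 := hA.2 _ (Finset.erase_subset _ _) hvc
    rw [← h2] at ht'A
    exact Finset.notMem_erase t' A ht'A
  simp only [IsVC, not_forall] at hnot
  obtain ⟨a, b, hab, hnab⟩ := hnot
  push_neg at hnab
  obtain ⟨haE, hbE⟩ := hnab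
  have key : G.Adj s t' := by
    rcases hA.1 hab with haA | hbA
    · have hat' : a = t' := by
        by_contra h
        exact haE (Finset.mem_erase.2 ⟨h, haA⟩)
      subst hat'
      rcases hB.1 hab with h | h
      · exact absurd h ht'B
      · rw [heq, Finset.mem_insert] at h
        rcases h with rfl | h
        · exact hab.symm
        · exact absurd h hbE
    · have hbt' : b = t' := by
        by_contra h
        exact hbE (Finset.mem_erase.2 ⟨h, hbA⟩)
      subst hbt'
      rcases hB.1 hab with h | h
      · rw [heq, Finset.mem_insert] at h
        rcases h with rfl | h
        · exact hab
        · exact absurd h haE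
      · exact absurd h ht'B
  exact ⟨A, B, t', hA, hB, key, heq⟩
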